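/- A labeled graph G on [n] is 12-representable by a 231-avoiding word if and only if there do not exist vertices x < y < z with (xz ∈ E and yz ∉ E) and there do not exist vertices x < y < z with (xy ∈ E and yz ∈ E and xz ∉ E). -/

import Mathlib

/-- Every occurrence of `j` precedes every occurrence of `i` in the word `w`. -/
def EveryBefore (w : List ℕ) (j i : ℕ) : Prop :=
  ∀ p q : Fin w.length, w.get p = j → w.get q = i → p < q

/-- The word `w` 12-represents the graph `G` on the vertex set `{1, …, n}`:
`w` uses only letters from `{1, …, n}`, contains each of them at least once, and
for `i < j` in `{1, …, n}`, `i` and `j` are adjacent iff every `j` occurs before every `i`. -/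
def Represents12 (n : ℕ) (G : SimpleGraph ℕ) (w : List ℕ) : Prop :=
  (∀ x ∈ w, 1 ≤ x ∧ x ≤ n) ∧
  (∀ i, 1 ≤ i → i ≤ n → i ∈ w) ∧
  (∀ i j, 1 ≤ i → i < j → j ≤ n → (G.Adj i j ↔ EveryBefore w j i))

/-- `w` is a permutation of `{1, …, n}`, i.e. each letter occurs exactly once. -/
def IsPermWord (n : ℕ) (w : List ℕ) : Prop :=
  w.Perm (List.range' 1 n)

/-- `w` avoids the pattern 231: no subsequence b, c, a with a < b < c. -/
def Avoids231 (w : List ℕ) : Prop :=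
  ¬ ∃ p q r : Fin w.length, p < q ∧ q < r ∧ w.get r < w.get p ∧ w.get p < w.get q

/-!
A permutation word `w` 12-represents `G` exactly when, for `i < j`, the letter `j` precedes `i`
iff `ij` is an edge; so `w` must list `{1, …, n}` sorted by the relation `rep12LE G`. If the two
forbidden configurations are absent this relation is a total preorder (transitivity is a check of
the six orderings of three letters), and a sorted word cannot contain a 231: in a subsequence
`b c a` with `a < b < c` the letter `a` would be adjacent to `c` but `b` not. Conversely, in any
231-avoiding representation the first configuration yields a 231, and the second contradicts
transitivity of "every `z` precedes every `x`".
-/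

section Necessity

variable {w : List ℕ}

theorem EveryBefore.trans {i j k : ℕ} (hkj : EveryBefore w k j) (hji : EveryBefore w j i)
    (hj : j ∈ w) : EveryBefore w k i := by
  obtain ⟨m, hm⟩ := List.mem_iff_get.1 hj
  exact fun p q hp hq => (hkj p m hp hm).trans (hji m q hm hq)

variable {n : ℕ} {G : SimpleGraph ℕ} {x y z : ℕ}

theorem Represents12.adj_trans (hrep : Represents12 n G w) (hx : 1 ≤ x) (hxy : x < y)
    (hyz : y < z) (hz : z ≤ n) (hxy' : G.Adj x y) (hyz' : G.Adj y z) : G.Adj x z := by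
  obtain ⟨-, hmem, hadj⟩ := hrep
  exact (hadj x z hx (hxy.trans hyz) hz).2 <| EveryBefore.trans
    ((hadj y z (by omega) hyz hz).1 hyz') ((hadj x y hx hxy (by omega)).1 hxy')
    (hmem y (by omega) (by omega))

theorem Represents12.adj_of_adj_of_avoids231 (hav : Avoids231 w) (hrep : Represents12 n G w)
    (hx : 1 ≤ x) (hxy : x < y) (hyz : y < z) (hz : z ≤ n) (hxz : G.Adj x z) : G.Adj y z := by
  obtain ⟨-, hmem, hadj⟩ := hrep
  have hzx : EveryBefore w z x := (hadj x z hx (hxy.trans hyz) hz).1 hxz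
  by_contra hyz'
  have hzy : ¬ EveryBefore w z y := fun h => hyz' ((hadj y z (by omega) hyz hz).2 h)
  simp only [EveryBefore, not_forall, not_lt] at hzy
  obtain ⟨p, q, hp, hq, hle⟩ := hzy
  have hqp : q < p := lt_of_le_of_ne hle (fun h => by subst h; omega)
  obtain ⟨r, hr⟩ := List.mem_iff_get.1 (hmem x hx (by omega))
  exact hav ⟨q, p, r, hqp, hzx p r hp hr, by omega, by omega⟩

end Necessity

section Sufficiency

theorem everyBefore_iff_of_pairwise {r : ℕ → ℕ → Prop} (hanti : ∀ x y, r x y → r y x → x = y)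
    {w : List ℕ} (hw : w.Pairwise r) {i j : ℕ} (hi : i ∈ w) (hj : j ∈ w) (hij : i ≠ j) :
    EveryBefore w j i ↔ r j i := by
  rw [List.pairwise_iff_get] at hw
  obtain ⟨p, rfl⟩ := List.mem_iff_get.1 hj
  obtain ⟨q, rfl⟩ := List.mem_iff_get.1 hi
  refine ⟨fun h => hw p q (h p q rfl rfl), fun hpq p' q' hp' hq' => ?_⟩
  rcases lt_trichotomy p' q' with h | rfl | h
  · exact h
  · exact absurd (hp'.symm.trans hq') (Ne.symm hij)
  · exact absurd (hanti _ _ hpq (hq' ▸ hp' ▸ hw q' p' h)) (Ne.symm hij)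

/-- `x` may stand before `y` in a permutation word 12-representing `G`. -/
def rep12LE (G : SimpleGraph ℕ) (x y : ℕ) : Prop :=
  (x ≤ y ∧ ¬ G.Adj x y) ∨ (y < x ∧ G.Adj x y)

variable {G : SimpleGraph ℕ}

instance rep12LE_total : Std.Total (rep12LE G) where
  total x y := by
    unfold rep12LE
    grind [SimpleGraph.adj_comm, SimpleGraph.irrefl]

theorem rep12LE_antisymm {x y : ℕ} (hxy : rep12LE G x y) (hyx : rep12LE G y x) : x = y := by
  unfold rep12LE at *
  grind [SimpleGraph.adj_comm]

theorem rep12LE_trans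
    (hA : ∀ x y z, x < y → y < z → G.Adj x z → G.Adj y z)
    (hB : ∀ x y z, x < y → y < z → G.Adj x y → G.Adj y z → G.Adj x z) :
    IsTrans ℕ (rep12LE G) where
  trans x y z h₁ h₂ := by
    unfold rep12LE at *
    grind [SimpleGraph.adj_comm, SimpleGraph.irrefl]

theorem avoids231_of_pairwise_rep12LE (hA : ∀ x y z, x < y → y < z → G.Adj x z → G.Adj y z)
    {w : List ℕ} (hw : w.Pairwise (rep12LE G)) : Avoids231 w := by
  rw [List.pairwise_iff_get] at hw
  rintro ⟨p, q, r, hpq, hqr, hrp, hpq'⟩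
  have hbc := hw p q hpq
  have hca := hw q r hqr
  unfold rep12LE at hbc hca
  have := hA (w.get r) (w.get p) (w.get q) hrp hpq'
  grind [SimpleGraph.adj_comm]

theorem represents12_of_pairwise_rep12LE {n : ℕ} {w : List ℕ} (hperm : w.Perm (List.range' 1 n))
    (hw : w.Pairwise (rep12LE G)) : Represents12 n G w := by
  have hmem (x : ℕ) : x ∈ w ↔ 1 ≤ x ∧ x ≤ n := by
    rw [hperm.mem_iff, List.mem_range'_1]
    omega
  refine ⟨fun x hx => (hmem x).1 hx, fun x h1 h2 => (hmem x).2 ⟨h1, h2⟩, fun i j hi hij hj => ?_⟩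
  rw [everyBefore_iff_of_pairwise (fun _ _ => rep12LE_antisymm) hw ((hmem i).2 (by omega))
    ((hmem j).2 (by omega)) hij.ne, rep12LE]
  grind [SimpleGraph.adj_comm]

theorem exists_avoids231_represents12 (n : ℕ)
    (hA : ∀ x y z, 1 ≤ x → x < y → y < z → z ≤ n → G.Adj x z → G.Adj y z)
    (hB : ∀ x y z, 1 ≤ x → x < y → y < z → z ≤ n → G.Adj x y → G.Adj y z → G.Adj x z) :
    ∃ w, Avoids231 w ∧ Represents12 n G w := by
  classical
  -- Sorting needs a transitive relation on all of `ℕ`, so we sort by the graph induced on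
  -- `{1, …, n}`, for which the hypotheses hold without bounds.
  let H := ((⊤ : G.Subgraph).induce (Set.Icc 1 n)).spanningCoe
  have hH (x y : ℕ) : H.Adj x y ↔ (1 ≤ x ∧ x ≤ n) ∧ (1 ≤ y ∧ y ≤ n) ∧ G.Adj x y := by
    simp [H]
  have hA' (x y z : ℕ) (hxy : x < y) (hyz : y < z) (hxz : H.Adj x z) : H.Adj y z := by
    rw [hH] at hxz ⊢
    exact ⟨⟨by omega, by omega⟩, hxz.2.1, hA x y z hxz.1.1 hxy hyz hxz.2.1.2 hxz.2.2⟩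
  have hB' (x y z : ℕ) (hxy : x < y) (hyz : y < z) (hxy' : H.Adj x y) (hyz' : H.Adj y z) :
      H.Adj x z := by
    rw [hH] at hxy' hyz' ⊢
    exact ⟨hxy'.1, hyz'.2.1, hB x y z hxy'.1.1 hxy hyz hyz'.2.1.2 hxy'.2.2 hyz'.2.2⟩
  have := rep12LE_trans hA' hB'
  let w := (List.range' 1 n).insertionSort (rep12LE H)
  have hw : w.Pairwise (rep12LE H) := List.pairwise_insertionSort _ _
  obtain ⟨hmem, hall, hadj⟩ := represents12_of_pairwise_rep12LE (List.perm_insertionSort _ _) hw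
  refine ⟨w, avoids231_of_pairwise_rep12LE hA' hw, hmem, hall, fun i j hi hij hj => ?_⟩
  rw [← hadj i j hi hij hj, hH]
  exact ⟨fun h => ⟨⟨hi, by omega⟩, ⟨by omega, hj⟩, h⟩, fun h => h.2.2⟩

end Sufficiency

theorem stmt_7 (n : ℕ) (G : SimpleGraph ℕ) :
    (∃ w, Avoids231 w ∧ Represents12 n G w) ↔
    ((¬ ∃ x y z, 1 ≤ x ∧ x < y ∧ y < z ∧ z ≤ n ∧ G.Adj x z ∧ ¬ G.Adj y z) ∧
     (¬ ∃ x y z, 1 ≤ x ∧ x < y ∧ y < z ∧ z ≤ n ∧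
        G.Adj x y ∧ G.Adj y z ∧ ¬ G.Adj x z)) := by
  constructor
  · rintro ⟨w, hav, hrep⟩
    exact ⟨fun ⟨x, y, z, hx, hxy, hyz, hz, hxz, hyz'⟩ =>
        hyz' (hrep.adj_of_adj_of_avoids231 hav hx hxy hyz hz hxz),
      fun ⟨x, y, z, hx, hxy, hyz, hz, hxy', hyz', hxz⟩ =>
        hxz (hrep.adj_trans hx hxy hyz hz hxy' hyz')⟩
  · rintro ⟨h₁, h₂⟩
    exact exists_avoids231_represents12 n
      (fun x y z hx hxy hyz hz hxz => by_contra fun h => h₁ ⟨x, y, z, hx, hxy, hyz, hz, hxz, h⟩)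
      (fun x y z hx hxy hyz hz hxy' hyz' =>
        by_contra fun h => h₂ ⟨x, y, z, hx, hxy, hyz, hz, hxy', hyz', h⟩)
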